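/- arXiv:1802.03259 — 2 statements merged into one kernel-verified Lean document; each statement's English description precedes it below -/
import Mathlib

section
/- Let S ⊂ ℝ^n be finite with |S| = C(n+r,r), r-generic, and let μ = Σ_{x∈S} μ_x δ_x with all μ_x > 0, with moment vector y. If θ is a polynomial such that the localizing matrix M_r(θ y) is positive semidefinite, then θ(x) ≥ 0 for every x ∈ S. -/
noncomputable section
open Classical Finset Matrix

/-- Multi-indices in `n` variables of total degree at most `r`. -/
abbrev MIdx (n r : ℕ) := {α : Fin n → ℕ // ∑ i, α i ≤ r}

instance MIdx.fintype (n r : ℕ) : Fintype (MIdx n r) := by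
  have h : ∀ a : MIdx n r, ∀ i, a.1 i ≤ r := fun a i =>
    le_trans (Finset.single_le_sum (fun j _ => Nat.zero_le (a.1 j)) (Finset.mem_univ i)) a.2
  have hinj : Function.Injective
      (fun a : MIdx n r => (fun i => (⟨a.1 i, Nat.lt_succ_of_le (h a i)⟩ : Fin (r+1)))) := by
    intro a b hab
    apply Subtype.ext; funext i
    have := congrFun hab i
    simpa [Fin.mk.injEq] using this
  have : Finite (MIdx n r) := Finite.of_injective _ hinj
  exact Fintype.ofFinite _

/-- The monomial `x^α = x₁^{α₁} ⋯ x_n^{α_n}`. -/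
def mono {n : ℕ} (x : Fin n → ℝ) (α : Fin n → ℕ) : ℝ := ∏ i, x i ^ α i

/-- Moments `y_α = ∑_{x ∈ S} μ_x x^α` of the measure `μ = ∑_{x∈S} μ_x δ_x`. -/
def moments {n : ℕ} (S : Finset (Fin n → ℝ)) (μ : (Fin n → ℝ) → ℝ) (α : Fin n → ℕ) : ℝ :=
  ∑ x ∈ S, μ x * mono x α

/-- The localizing matrix `M_r(θ y)(α,β) = ∑_γ θ_γ y_{α+β+γ}`. -/
def locMat (n r : ℕ) (θ : MvPolynomial (Fin n) ℝ) (y : (Fin n → ℕ) → ℝ) :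
    Matrix (MIdx n r) (MIdx n r) ℝ :=
  fun α β => ∑ γ ∈ θ.support, θ.coeff γ * y (fun i => α.1 i + β.1 i + γ i)

/-- The moment matrix `M_r(y)(α,β) = y_{α+β}`. -/
def momMat (n r : ℕ) (y : (Fin n → ℕ) → ℝ) : Matrix (MIdx n r) (MIdx n r) ℝ :=
  fun α β => y (fun i => α.1 i + β.1 i)

/-- `S` is `r`-generic: no nonzero polynomial of degree at most `r` vanishes on all of `S`. -/
def rGeneric {n : ℕ} (S : Finset (Fin n → ℝ)) (r : ℕ) : Prop :=
  ∀ g : MvPolynomial (Fin n) ℝ, g.totalDegree ≤ r →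
    (∀ x ∈ S, MvPolynomial.eval x g = 0) → g = 0

/-! Let `evalOn S r : c ↦ (∑ₐ cₐ xᵃ)_{x ∈ S}` evaluate on `S` the polynomials of degree `≤ r`,
given by their coefficient vectors. Genericity makes it injective, and the cardinality
hypothesis makes it a square system, so every function on `S` is interpolated; in particular
the indicator of a point `s` is. The quadratic form of `M_r(θ y)` at `c` is
`∑_{x ∈ S} μₓ θ(x) (evalOn S r c x)²`, which for the interpolant of `s` is `μₛ θ(s)`. -/

theorem card_MIdx (n r : ℕ) : Fintype.card (MIdx n r) = (n + r).choose r := by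
  -- adjoin the slack `r - |α|` as a zeroth coordinate to get multisets of size `r` on `Fin (n+1)`
  let e : MIdx n r ≃ {β : Fin (n + 1) → ℕ // ∑ i, β i = r} :=
    { toFun := fun a => ⟨Fin.cons (r - ∑ i, a.1 i) a.1, by
        have := a.2; rw [Fin.sum_cons]; omega⟩
      invFun := fun b => ⟨fun i => b.1 i.succ, by
        show ∑ i : Fin n, b.1 i.succ ≤ r
        have := b.2; rw [Fin.sum_univ_succ] at this; omega⟩
      left_inv := fun a => by ext i; simp
      right_inv := fun b => by
        ext i
        refine Fin.cases ?_ (fun j => by simp) i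
        have := b.2
        rw [Fin.sum_univ_succ] at this
        simp only [Fin.cons_zero]
        omega }
  rw [Fintype.card_congr (e.trans (Sym.equivNatSumOfFintype (Fin (n + 1)) r).symm),
    Sym.card_sym_eq_choose]
  simp

theorem mono_add {n : ℕ} (x : Fin n → ℝ) (a b : Fin n → ℕ) :
    mono x (fun i => a i + b i) = mono x a * mono x b := by
  simp only [mono, pow_add, prod_mul_distrib]

section Interpolation

variable {n r : ℕ}

def polyOfCoeffs (c : MIdx n r → ℝ) : MvPolynomial (Fin n) ℝ :=
  ∑ a, MvPolynomial.monomial (Finsupp.equivFunOnFinite.symm a.1) (c a)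

theorem eval_polyOfCoeffs (c : MIdx n r → ℝ) (x : Fin n → ℝ) :
    MvPolynomial.eval x (polyOfCoeffs c) = ∑ a, c a * mono x a.1 := by
  simp only [polyOfCoeffs, map_sum, MvPolynomial.eval_monomial,
    Finsupp.prod_fintype _ _ (fun i => pow_zero (x i))]
  rfl

theorem totalDegree_polyOfCoeffs_le (c : MIdx n r → ℝ) : (polyOfCoeffs c).totalDegree ≤ r := by
  refine MvPolynomial.totalDegree_finsetSum_le fun a _ => ?_
  refine (MvPolynomial.totalDegree_monomial_le _ _).trans ?_
  rw [Finsupp.sum_fintype _ _ (fun _ => rfl)]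
  exact a.2

theorem coeff_polyOfCoeffs (c : MIdx n r → ℝ) (a : MIdx n r) :
    (polyOfCoeffs c).coeff (Finsupp.equivFunOnFinite.symm a.1) = c a := by
  simp only [polyOfCoeffs, MvPolynomial.coeff_sum, MvPolynomial.coeff_monomial,
    EmbeddingLike.apply_eq_iff_eq, Subtype.val_inj, sum_ite_eq', mem_univ, if_true]

def evalOn (S : Finset (Fin n → ℝ)) (r : ℕ) : (MIdx n r → ℝ) →ₗ[ℝ] (S → ℝ) :=
  LinearMap.pi fun x => Fintype.linearCombination ℝ fun a : MIdx n r => mono x.1 a.1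

theorem evalOn_apply (S : Finset (Fin n → ℝ)) (c : MIdx n r → ℝ) (x : S) :
    evalOn S r c x = ∑ a, c a * mono x.1 a.1 := by
  simp [evalOn, Fintype.linearCombination_apply]

theorem rGeneric.injective_evalOn {S : Finset (Fin n → ℝ)} (hgen : rGeneric S r) :
    Function.Injective (evalOn S r) := by
  rw [← LinearMap.ker_eq_bot, LinearMap.ker_eq_bot']
  intro c hc
  have hpoly : polyOfCoeffs c = 0 := by
    refine hgen _ (totalDegree_polyOfCoeffs_le c) fun x hx => ?_
    rw [eval_polyOfCoeffs, ← evalOn_apply S c ⟨x, hx⟩, hc, Pi.zero_apply]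
  funext a
  rw [← coeff_polyOfCoeffs c a, hpoly, MvPolynomial.coeff_zero, Pi.zero_apply]

theorem rGeneric.surjective_evalOn {S : Finset (Fin n → ℝ)} (hcard : S.card = (n + r).choose r)
    (hgen : rGeneric S r) : Function.Surjective (evalOn S r) := by
  refine (LinearMap.injective_iff_surjective_of_finrank_eq_finrank ?_).mp hgen.injective_evalOn
  rw [Module.finrank_pi, Module.finrank_pi, card_MIdx, Fintype.card_coe, hcard]

end Interpolation

section LocalizingMatrix

variable {n r : ℕ} (S : Finset (Fin n → ℝ)) (μ : (Fin n → ℝ) → ℝ) (θ : MvPolynomial (Fin n) ℝ)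

theorem locMat_moments_apply (α β : MIdx n r) :
    locMat n r θ (moments S μ) α β
      = ∑ x ∈ S, μ x * MvPolynomial.eval x θ * (mono x α.1 * mono x β.1) := by
  simp only [locMat, moments, mul_sum]
  rw [sum_comm]
  refine sum_congr rfl fun x _ => ?_
  simp only [MvPolynomial.eval_eq', sum_mul, mul_sum]
  refine sum_congr rfl fun γ _ => ?_
  rw [mono_add x (fun i => α.1 i + β.1 i), mono_add]
  simp only [mono]
  ring

theorem dotProduct_locMat_moments_mulVec (c : MIdx n r → ℝ) :
    c ⬝ᵥ (locMat n r θ (moments S μ) *ᵥ c)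
      = ∑ x ∈ S, μ x * MvPolynomial.eval x θ * (∑ a, c a * mono x a.1) ^ 2 := by
  simp only [dotProduct, mulVec, locMat_moments_apply, sq, mul_sum, sum_mul]
  rw [sum_comm]
  refine (sum_congr rfl fun b _ => sum_comm).trans ?_
  rw [sum_comm]
  exact sum_congr rfl fun x _ => sum_congr rfl fun b _ => sum_congr rfl fun a _ => by ring

end LocalizingMatrix

/-- if `|S| = C(n+r,r)`, `S` is `r`-generic, all weights are positive and the
localizing matrix `M_r(θ y)` is positive semidefinite, then `θ ≥ 0` on `S`. -/
theorem nonneg_on_S_of_locMat_posSemidef {n r : ℕ} (S : Finset (Fin n → ℝ))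
    (hcard : S.card = (n + r).choose r) (hgen : rGeneric S r)
    (μ : (Fin n → ℝ) → ℝ) (hμ : ∀ x ∈ S, 0 < μ x)
    (θ : MvPolynomial (Fin n) ℝ)
    (hpsd : (locMat n r θ (moments S μ)).PosSemidef) :
    ∀ x ∈ S, 0 ≤ MvPolynomial.eval x θ := by
  intro s hs
  obtain ⟨c, hc⟩ := hgen.surjective_evalOn hcard (Pi.single ⟨s, hs⟩ 1)
  have hinterp : ∀ x (hx : x ∈ S), ∑ a, c a * mono x a.1 = if x = s then 1 else 0 := by
    intro x hx
    rw [← evalOn_apply S c ⟨x, hx⟩, hc]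
    by_cases hxs : x = s
    · subst hxs; simp
    · simp [hxs, Subtype.ext_iff]
  have hform : c ⬝ᵥ (locMat n r θ (moments S μ) *ᵥ c) = μ s * MvPolynomial.eval s θ := by
    rw [dotProduct_locMat_moments_mulVec, sum_eq_single_of_mem s hs]
    · simp [hinterp s hs]
    · intro x hx hxs
      simp [hinterp x hx, hxs]
  have hnonneg := hpsd.dotProduct_mulVec_nonneg c
  rw [star_trivial, hform] at hnonneg
  exact (mul_nonneg_iff_of_pos_left (hμ s hs)).mp hnonneg
end
end

section
/- Any optimal solution (Q*, b*, c*) of the relaxed minimum-volume covering ellipsoid problem (with inequality constraint c ≤ 1 − (1/4) b'Q⁻¹b) satisfies the equality c* = 1 − (1/4) b*'(Q*)⁻¹b*, provided |S| > 1 and S affinely spans ℝ^n; hence it is an optimal solution of the original problem with the equality constraint. -/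
/-! Completing the square, `-xᵀQx + bᵀx + c ≥ 0` says `(x - x₀)ᵀQ(x - x₀) ≤ γ` with
`x₀ = Q⁻¹b/2` and `γ = c + bᵀQ⁻¹b/4`, and the relaxed constraint says `γ ≤ 1`. Two distinct
covered points force `γ > 0`. If `γ < 1`, the triple `(Q/γ, b/γ, c/γ)` still covers `S` and has
`γ = 1`, so it is feasible, while `det (Q/γ) > det Q` contradicts optimality. -/

noncomputable section
open Matrix

section Quadric

variable {ι K : Type*} [Fintype ι]

def quadric [CommRing K] (Q : Matrix ι ι K) (b : ι → K) (c : K) (x : ι → K) : K :=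
  -(x ⬝ᵥ Q *ᵥ x) + b ⬝ᵥ x + c

def quadricCenter [DecidableEq ι] [Field K] (Q : Matrix ι ι K) (b : ι → K) : ι → K :=
  (1 / 2 : K) • Q⁻¹ *ᵥ b

def quadricRadiusSq [DecidableEq ι] [Field K] (Q : Matrix ι ι K) (b : ι → K) (c : K) : K :=
  c + 1 / 4 * (b ⬝ᵥ Q⁻¹ *ᵥ b)

theorem quadric_smul [CommRing K] (Q : Matrix ι ι K) (b : ι → K) (c t : K) (x : ι → K) :
    quadric (t • Q) (t • b) (t * c) x = t * quadric Q b c x := by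
  simp only [quadric, smul_mulVec, dotProduct_smul, smul_dotProduct, smul_eq_mul]
  ring

theorem quadricRadiusSq_smul [DecidableEq ι] [Field K] {Q : Matrix ι ι K} (hQ : IsUnit Q.det)
    (b : ι → K) (c : K) {t : K} (ht : t ≠ 0) :
    quadricRadiusSq (t • Q) (t • b) (t * c) = t * quadricRadiusSq Q b c := by
  let := invertibleOfNonzero ht
  rw [quadricRadiusSq, quadricRadiusSq, inv_smul Q t hQ, invOf_eq_inv]
  simp only [smul_mulVec, mulVec_smul, dotProduct_smul, smul_dotProduct, smul_eq_mul]
  field_simp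

theorem quadric_eq_quadricRadiusSq_sub [DecidableEq ι] [Field K] [CharZero K]
    {Q : Matrix ι ι K} (hQ : Q.IsSymm) (hdet : IsUnit Q.det) (b : ι → K) (c : K) (x : ι → K) :
    quadric Q b c x = quadricRadiusSq Q b c -
      (x - quadricCenter Q b) ⬝ᵥ Q *ᵥ (x - quadricCenter Q b) := by
  have hQu : Q *ᵥ Q⁻¹ *ᵥ b = b := by rw [mulVec_mulVec, mul_nonsing_inv Q hdet, one_mulVec]
  have huQx : Q⁻¹ *ᵥ b ⬝ᵥ Q *ᵥ x = b ⬝ᵥ x := by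
    rw [dotProduct_mulVec, ← mulVec_transpose, hQ.eq, hQu]
  simp only [quadric, quadricRadiusSq, quadricCenter, mulVec_sub, mulVec_smul, sub_dotProduct,
    dotProduct_sub, smul_dotProduct, dotProduct_smul, smul_eq_mul, hQu, huQx]
  rw [dotProduct_comm x b, dotProduct_comm (Q⁻¹ *ᵥ b) b]
  ring

end Quadric

variable {ι : Type*} [Fintype ι] [DecidableEq ι]

theorem quadricRadiusSq_pos_of_ne {Q : Matrix ι ι ℝ} (hQ : Q.PosDef) {b : ι → ℝ} {c : ℝ}
    {x₁ x₂ : ι → ℝ} (hx₁ : 0 ≤ quadric Q b c x₁) (hx₂ : 0 ≤ quadric Q b c x₂) (hne : x₁ ≠ x₂) :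
    0 < quadricRadiusSq Q b c := by
  have hsymm : Q.IsSymm := isHermitian_iff_isSymm.mp hQ.isHermitian
  have hdet : IsUnit Q.det := isUnit_iff_ne_zero.mpr hQ.det_pos.ne'
  by_contra! hγ
  have center_eq {x : ι → ℝ} (hx : 0 ≤ quadric Q b c x) : x = quadricCenter Q b := by
    by_contra hxne
    have hpos := hQ.dotProduct_mulVec_pos (sub_ne_zero.mpr hxne)
    rw [star_trivial] at hpos
    rw [quadric_eq_quadricRadiusSq_sub hsymm hdet] at hx
    linarith
  exact hne ((center_eq hx₁).trans (center_eq hx₂).symm)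

theorem Matrix.PosDef.det_lt_det_smul [Nonempty ι] {Q : Matrix ι ι ℝ} (hQ : Q.PosDef) {t : ℝ}
    (ht : 1 < t) : Q.det < (t • Q).det := by
  rw [det_smul]
  exact lt_mul_left hQ.det_pos (one_lt_pow₀ ht Fintype.card_ne_zero)

theorem mvce_relaxation_exact_general {n : ℕ} (S : Finset (Fin n → ℝ))
    (hcard : 1 < S.card)
    (Q : Matrix (Fin n) (Fin n) ℝ) (b : Fin n → ℝ) (c : ℝ)
    (hQ : Q.PosDef)
    (hcover : ∀ x ∈ S, 0 ≤ -(x ⬝ᵥ Q.mulVec x) + b ⬝ᵥ x + c)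
    (hineq : c ≤ 1 - (1 / 4) * (b ⬝ᵥ Q⁻¹.mulVec b))
    (hopt : ∀ (Q' : Matrix (Fin n) (Fin n) ℝ) (b' : Fin n → ℝ) (c' : ℝ),
      Q'.PosDef → (∀ x ∈ S, 0 ≤ -(x ⬝ᵥ Q'.mulVec x) + b' ⬝ᵥ x + c') →
      c' ≤ 1 - (1 / 4) * (b' ⬝ᵥ Q'⁻¹.mulVec b') →
      Q.det ^ (-(1 / 2) : ℝ) ≤ Q'.det ^ (-(1 / 2) : ℝ)) :
    c = 1 - (1 / 4) * (b ⬝ᵥ Q⁻¹.mulVec b) := by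
  obtain ⟨x₁, hx₁, x₂, hx₂, hne⟩ := Finset.one_lt_card.mp hcard
  have : Nonempty (Fin n) := by
    by_contra! h
    exact hne (funext fun i => (h.false i).elim)
  have hγ : 0 < quadricRadiusSq Q b c :=
    quadricRadiusSq_pos_of_ne hQ (hcover x₁ hx₁) (hcover x₂ hx₂) hne
  refine le_antisymm hineq (not_lt.mp fun hlt => ?_)
  set t := (quadricRadiusSq Q b c)⁻¹
  have ht : 1 < t := one_lt_inv₀ hγ |>.mpr (by rw [quadricRadiusSq]; linarith)
  have hfeas : t * c ≤ 1 - 1 / 4 * ((t • b) ⬝ᵥ (t • Q)⁻¹ *ᵥ (t • b)) := by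
    have h := quadricRadiusSq_smul (isUnit_iff_ne_zero.mpr hQ.det_pos.ne') b c
      (inv_ne_zero hγ.ne')
    rw [inv_mul_cancel₀ hγ.ne', quadricRadiusSq] at h
    linarith
  have hle := hopt (t • Q) (t • b) (t * c) (hQ.smul (by positivity))
    (fun x hx => by
      change 0 ≤ quadric _ _ _ x
      rw [quadric_smul]
      exact mul_nonneg (by positivity) (hcover x hx)) hfeas
  exact hle.not_gt (Real.rpow_lt_rpow_of_neg hQ.det_pos (hQ.det_lt_det_smul ht) (by norm_num))

/-- any optimal solution `(Q*, b*, c*)` of the relaxed minimum-volume covering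
ellipsoid problem (with the inequality `c ≤ 1 − (1/4) b'Q⁻¹b`) satisfies the equality
`c* = 1 − (1/4) b*'(Q*)⁻¹ b*`, provided `|S| > 1` and `S` affinely spans `ℝ^n`; hence it is
optimal for the original problem with the equality constraint. -/
theorem mvce_relaxation_exact {n : ℕ} (S : Finset (Fin n → ℝ))
    (hcard : 1 < S.card) (hspan : affineSpan ℝ (S : Set (Fin n → ℝ)) = ⊤)
    (Q : Matrix (Fin n) (Fin n) ℝ) (b : Fin n → ℝ) (c : ℝ)
    (hQ : Q.PosDef)
    (hcover : ∀ x ∈ S, 0 ≤ -(x ⬝ᵥ Q.mulVec x) + b ⬝ᵥ x + c)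
    (hineq : c ≤ 1 - (1 / 4) * (b ⬝ᵥ Q⁻¹.mulVec b))
    (hopt : ∀ (Q' : Matrix (Fin n) (Fin n) ℝ) (b' : Fin n → ℝ) (c' : ℝ),
      Q'.PosDef → (∀ x ∈ S, 0 ≤ -(x ⬝ᵥ Q'.mulVec x) + b' ⬝ᵥ x + c') →
      c' ≤ 1 - (1 / 4) * (b' ⬝ᵥ Q'⁻¹.mulVec b') →
      Q.det ^ (-(1 / 2) : ℝ) ≤ Q'.det ^ (-(1 / 2) : ℝ)) :
    c = 1 - (1 / 4) * (b ⬝ᵥ Q⁻¹.mulVec b) :=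
  mvce_relaxation_exact_general S hcard Q b c hQ hcover hineq hopt
end
end
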